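/- arXiv:2408.07043 — 2 statements merged into one kernel-verified Lean document; each statement's English description precedes it below -/
import Mathlib

section
/- Let g : ℝ → ℝ be continuous, bounded, and integrable, and set u = G g. Then u is twice continuously differentiable on ℝ, its derivative is u′(x) = −(1/2)∫_ℝ sgn(x−y) e^{−|x−y|} g(y) dy, and u(x) − u″(x) = g(x) for every x ∈ ℝ; that is, G inverts the operator 1 − d²/dx². -/
open MeasureTheory Real

/-- Convolution with the Green's function of `1 - d²/dx²` on `ℝ`. -/
noncomputable def G (f : ℝ → ℝ) (x : ℝ) : ℝ :=
  (1 / 2) * ∫ y : ℝ, Real.exp (-|x - y|) * f y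

/-!
Splitting the integral at `x`,
`G g x = ½ (e^{-x} ∫_{-∞}^x e^y g(y) dy + e^x ∫_x^∞ e^{-y} g(y) dy)`.
By the fundamental theorem of calculus each half-line integral is differentiable with derivative
`± e^{∓x} g(x)`; these boundary terms cancel in `(G g)'` and add up to `-g` in `(G g)''`, while
the derivatives of the factors `e^{∓x}` reproduce `G g`.
-/

open Set

section HalfLineIntegral

variable {E : Type*} [NormedAddCommGroup E] [NormedSpace ℝ E] [CompleteSpace E] {h : ℝ → E}

theorem hasDerivAt_setIntegral_Iic (hc : Continuous h) (hi : ∀ x, IntegrableOn h (Iic x))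
    (x : ℝ) : HasDerivAt (fun t => ∫ y in Iic t, h y) (h x) x := by
  have hsplit : (fun t => ∫ y in Iic t, h y)
      = fun t => (∫ y in Iic 0, h y) + ∫ y in (0 : ℝ)..t, h y := by
    funext t
    rw [← intervalIntegral.integral_Iic_sub_Iic (hi 0) (hi t), add_sub_cancel]
  rw [hsplit]
  exact (intervalIntegral.integral_hasDerivAt_right (hc.intervalIntegrable 0 x)
    hc.aestronglyMeasurable.stronglyMeasurableAtFilter hc.continuousAt).const_add _

theorem hasDerivAt_setIntegral_Ioi (hc : Continuous h) (hi : ∀ x, IntegrableOn h (Ioi x))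
    (x : ℝ) : HasDerivAt (fun t => ∫ y in Ioi t, h y) (-h x) x := by
  have hsplit : (fun t => ∫ y in Ioi t, h y)
      = fun t => (∫ y in Ioi 0, h y) - ∫ y in (0 : ℝ)..t, h y := by
    funext t
    rw [← intervalIntegral.integral_Ioi_sub_Ioi' (hi 0) (hi t), sub_sub_cancel]
  rw [hsplit]
  exact (intervalIntegral.integral_hasDerivAt_right (hc.intervalIntegrable 0 x)
    hc.aestronglyMeasurable.stronglyMeasurableAtFilter hc.continuousAt).const_sub _

end HalfLineIntegral

noncomputable def greenLeft (g : ℝ → ℝ) (x : ℝ) : ℝ := ∫ y in Iic x, exp y * g y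

noncomputable def greenRight (g : ℝ → ℝ) (x : ℝ) : ℝ := ∫ y in Ioi x, exp (-y) * g y

noncomputable def G' (g : ℝ → ℝ) (x : ℝ) : ℝ :=
  -(1 / 2) * ∫ y, Real.sign (x - y) * exp (-|x - y|) * g y

theorem hasDerivAt_exp_neg (x : ℝ) : HasDerivAt (fun t => exp (-t)) (-exp (-x)) x := by
  simpa using (hasDerivAt_neg x).exp

section Green

variable {g : ℝ → ℝ}

theorem integrableOn_Iic_exp_mul (hgi : Integrable g) (x : ℝ) :
    IntegrableOn (fun y => exp y * g y) (Iic x) :=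
  hgi.integrableOn.bdd_mul continuous_exp.aestronglyMeasurable <|
    (ae_restrict_mem measurableSet_Iic).mono fun y hy => by
      rw [norm_of_nonneg (exp_pos y).le]; exact exp_le_exp.2 hy

theorem integrableOn_Ioi_exp_neg_mul (hgi : Integrable g) (x : ℝ) :
    IntegrableOn (fun y => exp (-y) * g y) (Ioi x) :=
  hgi.integrableOn.bdd_mul (continuous_exp.comp continuous_neg).aestronglyMeasurable <|
    (ae_restrict_mem measurableSet_Ioi).mono fun y hy => by
      rw [norm_of_nonneg (exp_pos _).le]
      exact exp_le_exp.2 (neg_le_neg (le_of_lt hy))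

theorem hasDerivAt_greenLeft (hg : Continuous g) (hgi : Integrable g) (x : ℝ) :
    HasDerivAt (greenLeft g) (exp x * g x) x :=
  hasDerivAt_setIntegral_Iic (continuous_exp.mul hg) (integrableOn_Iic_exp_mul hgi) x

theorem hasDerivAt_greenRight (hg : Continuous g) (hgi : Integrable g) (x : ℝ) :
    HasDerivAt (greenRight g) (-(exp (-x) * g x)) x :=
  hasDerivAt_setIntegral_Ioi ((continuous_exp.comp continuous_neg).mul hg)
    (integrableOn_Ioi_exp_neg_mul hgi) x

/-- Both `e^{-|t|}` and `sign t * e^{-|t|}` are of this form; `φ 0` does not matter since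
`{x}` is a null set. -/
theorem integral_comp_sub_mul_eq_greenLeft_add_greenRight (hgi : Integrable g)
    {φ : ℝ → ℝ} {a b : ℝ} (hpos : ∀ t > 0, φ t = a * exp (-t))
    (hneg : ∀ t < 0, φ t = b * exp t) (x : ℝ) :
    ∫ y, φ (x - y) * g y = a * exp (-x) * greenLeft g x + b * exp x * greenRight g x := by
  have hleft :
      EqOn (fun y => a * exp (-x) * (exp y * g y)) (fun y => φ (x - y) * g y) (Iio x) :=
    fun y hy => by
      dsimp only
      rw [hpos _ (sub_pos.2 hy), neg_sub, sub_eq_add_neg, exp_add]; ring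
  have hright :
      EqOn (fun y => b * exp x * (exp (-y) * g y)) (fun y => φ (x - y) * g y) (Ioi x) :=
    fun y hy => by
      dsimp only
      rw [hneg _ (sub_neg.2 hy), sub_eq_add_neg, exp_add]; ring
  have hintl : IntegrableOn (fun y => φ (x - y) * g y) (Iio x) :=
    IntegrableOn.congr_fun
      (((integrableOn_Iic_exp_mul hgi x).mono_set Iio_subset_Iic_self).const_mul (a * exp (-x)))
      hleft measurableSet_Iio
  have hintr : IntegrableOn (fun y => φ (x - y) * g y) (Ioi x) :=
    IntegrableOn.congr_fun ((integrableOn_Ioi_exp_neg_mul hgi x).const_mul (b * exp x))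
      hright measurableSet_Ioi
  rw [← intervalIntegral.integral_Iio_add_Ici hintl
    ((integrableOn_Ici_iff_integrableOn_Ioi).2 hintr), integral_Ici_eq_integral_Ioi,
    ← setIntegral_congr_fun measurableSet_Iio hleft,
    ← setIntegral_congr_fun measurableSet_Ioi hright,
    integral_const_mul, integral_const_mul, greenLeft, integral_Iic_eq_integral_Iio, greenRight]

theorem G_eq (hgi : Integrable g) (x : ℝ) :
    G g x = (1 / 2) * (exp (-x) * greenLeft g x + exp x * greenRight g x) := by
  rw [G, integral_comp_sub_mul_eq_greenLeft_add_greenRight hgi (φ := fun t => exp (-|t|))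
    (a := 1) (b := 1) (fun t ht => by rw [abs_of_pos ht, one_mul])
    (fun t ht => by rw [abs_of_neg ht, neg_neg, one_mul])]
  ring

theorem G'_eq (hgi : Integrable g) (x : ℝ) :
    G' g x = (1 / 2) * (-(exp (-x) * greenLeft g x) + exp x * greenRight g x) := by
  rw [G', integral_comp_sub_mul_eq_greenLeft_add_greenRight hgi
    (φ := fun t => Real.sign t * exp (-|t|)) (a := 1) (b := -1)
    (fun t ht => by rw [Real.sign_of_pos ht, abs_of_pos ht])
    (fun t ht => by rw [Real.sign_of_neg ht, abs_of_neg ht, neg_neg])]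
  ring

theorem hasDerivAt_G (hg : Continuous g) (hgi : Integrable g) (x : ℝ) :
    HasDerivAt (G g) (G' g x) x := by
  have hsum := (((hasDerivAt_exp_neg x).mul (hasDerivAt_greenLeft hg hgi x)).add
    ((hasDerivAt_exp x).mul (hasDerivAt_greenRight hg hgi x))).const_mul (1 / 2 : ℝ)
  rw [funext (G_eq hgi), G'_eq hgi]
  exact hsum.congr_deriv (by ring)

theorem hasDerivAt_G' (hg : Continuous g) (hgi : Integrable g) (x : ℝ) :
    HasDerivAt (G' g) (G g x - g x) x := by
  have hsum := (((hasDerivAt_exp_neg x).mul (hasDerivAt_greenLeft hg hgi x)).neg.add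
    ((hasDerivAt_exp x).mul (hasDerivAt_greenRight hg hgi x))).const_mul (1 / 2 : ℝ)
  rw [funext (G'_eq hgi), G_eq hgi]
  refine hsum.congr_deriv ?_
  have hexp : exp (-x) * exp x = 1 := by rw [← exp_add, neg_add_cancel, exp_zero]
  linear_combination (-g x) * hexp

end Green

theorem G_inverts_one_sub_dxx_general (g : ℝ → ℝ) (hg_cont : Continuous g) (hg_int : Integrable g) :
    ContDiff ℝ 2 (G g) ∧
    (∀ x : ℝ, deriv (G g) x
        = -(1 / 2) * ∫ y : ℝ, Real.sign (x - y) * Real.exp (-|x - y|) * g y) ∧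
    (∀ x : ℝ, G g x - deriv (deriv (G g)) x = g x) := by
  have hG := hasDerivAt_G hg_cont hg_int
  have hG' := hasDerivAt_G' hg_cont hg_int
  have hderiv : deriv (G g) = G' g := funext fun x => (hG x).deriv
  have hderiv2 : deriv (G' g) = fun x => G g x - g x := funext fun x => (hG' x).deriv
  have hdiff : Differentiable ℝ (G g) := fun x => (hG x).differentiableAt
  refine ⟨?_, fun x => congrFun hderiv x, fun x => by rw [hderiv, hderiv2]; ring⟩
  rw [show (2 : WithTop ℕ∞) = 1 + 1 from rfl, contDiff_succ_iff_deriv, hderiv,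
    contDiff_one_iff_deriv, hderiv2]
  exact ⟨hdiff, by simp, fun x => (hG' x).differentiableAt, hdiff.continuous.sub hg_cont⟩

/-- If `g` is continuous, bounded and integrable, then `u = G g` is `C²`,
`u′(x) = -(1/2) ∫ sgn(x-y) e^{-|x-y|} g(y) dy`, and `u - u″ = g`, i.e. `G` inverts
`1 - d²/dx²`. -/
theorem G_inverts_one_sub_dxx (g : ℝ → ℝ) (hg_cont : Continuous g)
    (hg_bdd : ∃ C : ℝ, ∀ x : ℝ, |g x| ≤ C) (hg_int : Integrable g) :
    ContDiff ℝ 2 (G g) ∧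
    (∀ x : ℝ, deriv (G g) x
        = -(1 / 2) * ∫ y : ℝ, Real.sign (x - y) * Real.exp (-|x - y|) * g y) ∧
    (∀ x : ℝ, G g x - deriv (deriv (G g)) x = g x) :=
  G_inverts_one_sub_dxx_general g hg_cont hg_int
end

section
/- Let q > 1 and 0 < c ≤ 2/(2+q). Define λ_c(t) = t^c/log t, μ_c(t) = t^{1−c} (log t)², and let φ : ℝ → ℝ be given by φ(x) = e^x − 1 for x ≤ 0 and φ(x) = 1 − e^{−x} for x > 0 (so that φ′(x) = e^{−|x|} and |φ| ≤ 1). Let u : [0,∞) × ℝ → ℝ be such that u(t,·) ∈ L²(ℝ) for each t and sup_{t≥0} ‖u(t,·)‖_{L²(ℝ)} < ∞. Then the functional M_q(t) = (1/μ_c(t)) ∫_ℝ φ(x/λ_c(t)) e^{−|x|/λ_c(t)^q} u(t,x) dx satisfies sup_{t ≥ 3} |M_q(t)| < ∞. -/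
open MeasureTheory Real

/-- `λ_c(t) = t^c / log t`. -/
noncomputable def lam (c t : ℝ) : ℝ := t ^ c / Real.log t

/-- `μ_c(t) = t^{1-c} (log t)²`. -/
noncomputable def mu (c t : ℝ) : ℝ := t ^ (1 - c) * (Real.log t) ^ 2

/-- The weight `φ(x) = eˣ - 1` for `x ≤ 0` and `φ(x) = 1 - e^{-x}` for `x > 0`. -/
noncomputable def phi (x : ℝ) : ℝ :=
  if x ≤ 0 then Real.exp x - 1 else 1 - Real.exp (-x)

/-- The virial functional
`M_q(t) = (1/μ_c(t)) ∫ φ(x/λ_c(t)) e^{-|x|/λ_c(t)^q} u(t,x) dx`. -/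
noncomputable def Mq (c q : ℝ) (u : ℝ → ℝ → ℝ) (t : ℝ) : ℝ :=
  (1 / mu c t) * ∫ x : ℝ, phi (x / lam c t) * Real.exp (-|x| / (lam c t) ^ q) * u t x

/-! Cauchy–Schwarz against the weight: as `|φ| ≤ 1`, the weight `φ(x/λ) e^{-|x|/λ^q}` is dominated
by `e^{-|x|/λ^q}`, whose `L²` norm is `λ^{q/2}`, so `|M_q(t)| ≤ λ^{q/2}/μ · ‖u(t)‖_{L²}`. For `t ≥ 3`
we have `log t ≥ 1`, hence `λ^{q/2} ≤ t^{cq/2} ≤ t^{1-c} ≤ μ`, the middle step being exactly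
`c ≤ 2/(2+q)`. -/

lemma integrable_exp_neg_mul_abs {k : ℝ} (hk : 0 < k) :
    Integrable fun x : ℝ => exp (-k * |x|) := by
  have hIic : IntegrableOn (fun x : ℝ => exp (-k * |x|)) (Set.Iic 0) :=
    (integrableOn_exp_mul_Iic hk 0).congr_fun (fun x hx => by
      simp only [abs_of_nonpos (Set.mem_Iic.mp hx), neg_mul_neg]) measurableSet_Iic
  have hIoi : IntegrableOn (fun x : ℝ => exp (-k * |x|)) (Set.Ioi 0) :=
    (integrableOn_exp_mul_Ioi (neg_lt_zero.mpr hk) 0).congr_fun (fun x hx => by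
      simp only [abs_of_pos (Set.mem_Ioi.mp hx)]) measurableSet_Ioi
  simpa only [Set.Iic_union_Ioi, integrableOn_univ] using hIic.union hIoi

lemma integral_exp_neg_mul_abs {k : ℝ} (hk : 0 < k) :
    ∫ x : ℝ, exp (-k * |x|) = 2 / k := by
  rw [integral_comp_abs (f := fun y => exp (-k * y)),
    integral_exp_mul_Ioi (neg_lt_zero.mpr hk), mul_zero, exp_zero]
  field_simp

lemma eLpNorm_exp_neg_abs_div {a : ℝ} (ha : 0 < a) :
    eLpNorm (fun x : ℝ => exp (-|x| / a)) 2 volume = ENNReal.ofReal √a := by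
  have hsq : ∀ x : ℝ, exp (-|x| / a) ^ 2 = exp (-(2 / a) * |x|) := fun x => by
    rw [← exp_nat_mul]; ring_nf
  have hL2 : MemLp (fun x : ℝ => exp (-|x| / a)) 2 volume :=
    (memLp_two_iff_integrable_sq (by fun_prop)).mpr <| by
      simpa only [hsq] using integrable_exp_neg_mul_abs (div_pos two_pos ha)
  rw [hL2.eLpNorm_eq_integral_rpow_norm two_ne_zero ENNReal.ofNat_ne_top, sqrt_eq_rpow]
  simp only [ENNReal.toReal_ofNat, rpow_two, norm_eq_abs, abs_exp, hsq, integral_exp_neg_mul_abs (div_pos two_pos ha)]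
  norm_num

lemma abs_phi_le_one (y : ℝ) : |phi y| ≤ 1 := by
  unfold phi
  split_ifs with h
  · rw [abs_of_nonpos (by linarith [exp_le_one_iff.mpr h])]
    linarith [exp_pos y]
  · rw [abs_of_nonneg (by linarith [exp_le_one_iff.mpr (by linarith : -y ≤ 0)])]
    linarith [exp_pos (-y)]

lemma measurable_phi : Measurable phi :=
  Measurable.ite measurableSet_Iic (by fun_prop) (by fun_prop)

lemma enorm_integral_mul_le_eLpNorm_mul_eLpNorm {α : Type*} [MeasurableSpace α] {μ : Measure α}
    {f g : α → ℝ} (hf : AEStronglyMeasurable f μ) (hg : AEStronglyMeasurable g μ) :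
    ‖∫ x, f x * g x ∂μ‖ₑ ≤ eLpNorm f 2 μ * eLpNorm g 2 μ := calc
  ‖∫ x, f x * g x ∂μ‖ₑ ≤ ∫⁻ x, ‖f x * g x‖ₑ ∂μ := enorm_integral_le_lintegral_enorm _
  _ = eLpNorm (fun x => f x * g x) 1 μ := eLpNorm_one_eq_lintegral_enorm.symm
  _ ≤ eLpNorm f 2 μ * eLpNorm g 2 μ := by
    simpa using eLpNorm_le_eLpNorm_mul_eLpNorm_of_nnnorm hf hg (· * ·) 1
      (ae_of_all _ fun x => by simp [nnnorm_mul])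

lemma enorm_integral_mul_le_of_abs_le_exp_neg_abs_div {w g : ℝ → ℝ} {a : ℝ} (ha : 0 < a)
    (hw : AEStronglyMeasurable w volume) (hwb : ∀ x, |w x| ≤ exp (-|x| / a))
    (hg : AEStronglyMeasurable g volume) :
    ‖∫ x, w x * g x‖ₑ ≤ ENNReal.ofReal √a * eLpNorm g 2 volume := by
  refine (enorm_integral_mul_le_eLpNorm_mul_eLpNorm hw hg).trans ?_
  gcongr
  rw [← eLpNorm_exp_neg_abs_div ha]
  exact eLpNorm_mono fun x => by simpa only [norm_eq_abs, abs_exp] using hwb x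

lemma lam_pos (c : ℝ) {t : ℝ} (ht : 1 < t) : 0 < lam c t :=
  div_pos (rpow_pos_of_pos (by linarith) c) (log_pos ht)

lemma mu_pos (c : ℝ) {t : ℝ} (ht : 1 < t) : 0 < mu c t :=
  mul_pos (rpow_pos_of_pos (by linarith) _) (pow_pos (log_pos ht) 2)

lemma abs_Mq_le {c q t C : ℝ} {u : ℝ → ℝ → ℝ} (ht : 1 < t)
    (hu : AEStronglyMeasurable (u t) volume) (hC : eLpNorm (u t) 2 volume ≤ ENNReal.ofReal C)
    (hC0 : 0 ≤ C) : |Mq c q u t| ≤ lam c t ^ (q / 2) / mu c t * C := by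
  have hlam := lam_pos c ht
  have ha : 0 < lam c t ^ q := rpow_pos_of_pos hlam q
  have hw : ∀ x, |phi (x / lam c t) * exp (-|x| / lam c t ^ q)| ≤ exp (-|x| / lam c t ^ q) :=
    fun x => by
      rw [abs_mul, abs_exp]
      exact mul_le_of_le_one_left (exp_pos _).le (abs_phi_le_one _)
  have hI : |∫ x, phi (x / lam c t) * exp (-|x| / lam c t ^ q) * u t x| ≤ √(lam c t ^ q) * C := by
    have hwm : AEStronglyMeasurable (fun x => phi (x / lam c t) * exp (-|x| / lam c t ^ q)) :=
      ((measurable_phi.comp (by fun_prop)).mul (by fun_prop)).aestronglyMeasurable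
    have key : ‖∫ x, phi (x / lam c t) * exp (-|x| / lam c t ^ q) * u t x‖ₑ ≤
        ENNReal.ofReal √(lam c t ^ q) * ENNReal.ofReal C :=
      (enorm_integral_mul_le_of_abs_le_exp_neg_abs_div ha hwm hw hu).trans (by gcongr)
    rwa [← ENNReal.ofReal_mul (sqrt_nonneg _), ← ofReal_norm, norm_eq_abs,
      ENNReal.ofReal_le_ofReal_iff (by positivity)] at key
  have hsqrt : √(lam c t ^ q) = lam c t ^ (q / 2) := by
    rw [sqrt_eq_rpow, ← rpow_mul hlam.le, mul_one_div]
  unfold Mq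
  rw [abs_mul, abs_of_pos (one_div_pos.mpr (mu_pos c ht)), ← hsqrt, one_div_mul_eq_div,
    div_mul_eq_mul_div]
  exact div_le_div_of_nonneg_right hI (mu_pos c ht).le

lemma lam_rpow_half_le_mu {c q t : ℝ} (hq : 0 ≤ q) (hcq : c ≤ 2 / (2 + q)) (ht : 3 ≤ t) :
    lam c t ^ (q / 2) ≤ mu c t := by
  have ht0 : 0 < t := by linarith
  have hlog : 1 ≤ log t := by
    rw [le_log_iff_exp_le ht0]
    linarith [exp_one_lt_three]
  have hexp : c * (q / 2) ≤ 1 - c := by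
    rw [le_div_iff₀ (by linarith)] at hcq
    linarith
  calc lam c t ^ (q / 2) ≤ (t ^ c) ^ (q / 2) :=
        rpow_le_rpow (lam_pos c (by linarith)).le
          (div_le_self (rpow_pos_of_pos ht0 c).le hlog) (by positivity)
    _ = t ^ (c * (q / 2)) := (rpow_mul ht0.le c (q / 2)).symm
    _ ≤ t ^ (1 - c) := rpow_le_rpow_of_exponent_le (by linarith) hexp
    _ ≤ mu c t := le_mul_of_one_le_right (rpow_pos_of_pos ht0 _).le (one_le_pow₀ hlog)

theorem virial_functional_bounded_general (q c : ℝ) (hq : 1 < q)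
    (hcq : c ≤ 2 / (2 + q)) (u : ℝ → ℝ → ℝ)
    (h_L2 : ∀ t : ℝ, 0 ≤ t → MemLp (u t) 2 volume)
    (h_bdd : ∃ C : ℝ, ∀ t : ℝ, 0 ≤ t → eLpNorm (u t) 2 volume ≤ ENNReal.ofReal C) :
    ∃ M : ℝ, ∀ t : ℝ, 3 ≤ t → |Mq c q u t| ≤ M := by
  obtain ⟨C, hC⟩ := h_bdd
  refine ⟨max C 0, fun t ht => ?_⟩
  have ht0 : 0 ≤ t := by linarith
  have hCt : eLpNorm (u t) 2 volume ≤ ENNReal.ofReal (max C 0) :=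
    (hC t ht0).trans (ENNReal.ofReal_le_ofReal (le_max_left _ _))
  have hpre : lam c t ^ (q / 2) / mu c t ≤ 1 :=
    div_le_one_of_le₀ (lam_rpow_half_le_mu (by linarith) hcq ht) (mu_pos c (by linarith)).le
  calc |Mq c q u t| ≤ lam c t ^ (q / 2) / mu c t * max C 0 :=
        abs_Mq_le (by linarith) (h_L2 t ht0).aestronglyMeasurable hCt (le_max_right _ _)
    _ ≤ max C 0 := mul_le_of_le_one_left (le_max_right _ _) hpre

/-- If `u(t,·) ∈ L²(ℝ)` with a uniform-in-time bound, `q > 1` and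
`0 < c ≤ 2/(2+q)`, then the functional `M_q` is bounded on `[3, ∞)`. -/
theorem virial_functional_bounded (q c : ℝ) (hq : 1 < q) (hc : 0 < c)
    (hcq : c ≤ 2 / (2 + q)) (u : ℝ → ℝ → ℝ)
    (h_L2 : ∀ t : ℝ, 0 ≤ t → MemLp (u t) 2 volume)
    (h_bdd : ∃ C : ℝ, ∀ t : ℝ, 0 ≤ t → eLpNorm (u t) 2 volume ≤ ENNReal.ofReal C) :
    ∃ M : ℝ, ∀ t : ℝ, 3 ≤ t → |Mq c q u t| ≤ M :=
  virial_functional_bounded_general q c hq hcq u h_L2 h_bdd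
end
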